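/- Let {f_{α,γ}}_{α,γ∈ℤ} ⊆ ℂ[λ,∂] satisfy (βλ - αμ) f_{α+β,γ}(λ+μ, ∂) = f_{β,γ}(μ, ∂+λ) f_{α,β+γ}(λ, ∂) - f_{α,γ}(λ, ∂+μ) f_{β,α+γ}(μ, ∂) for all α,β,γ ∈ ℤ. If f_{-1,γ₀} = 0 for some γ₀ ∈ ℤ, then f_{α,γ} = 0 for all α,γ ∈ ℤ with γ ≥ γ₀ and α+γ ≤ γ₀-1. -/

import Mathlib

open MvPolynomial

/-- Substitute the two variables of `f ∈ ℂ[λ,∂]` by elements of `ℂ[λ,μ,∂]`. -/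
noncomputable def sub2 (f : MvPolynomial (Fin 2) ℂ) (a b : MvPolynomial (Fin 3) ℂ) :
    MvPolynomial (Fin 3) ℂ :=
  aeval ![a, b] f

/-- The structure coefficient equation of a free intermediate series module over the
Block-type Lie conformal algebra `B`, as an identity in `ℂ[λ,μ,∂]`
(`λ = X 0`, `μ = X 1`, `∂ = X 2`):
`(βλ - αμ) f_{α+β,γ}(λ+μ,∂)
   = f_{β,γ}(μ,∂+λ) f_{α,β+γ}(λ,∂) - f_{α,γ}(λ,∂+μ) f_{β,α+γ}(μ,∂)`. -/
def StructEq (f : ℤ → ℤ → MvPolynomial (Fin 2) ℂ) : Prop :=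
  ∀ α β γ : ℤ,
    (C (β : ℂ) * X 0 - C (α : ℂ) * X 1) * sub2 (f (α + β) γ) (X 0 + X 1) (X 2)
      = sub2 (f β γ) (X 1) (X 2 + X 0) * sub2 (f α (β + γ)) (X 0) (X 2)
        - sub2 (f α γ) (X 0) (X 2 + X 1) * sub2 (f β (α + γ)) (X 1) (X 2)


/-! Every instance of the structure equation whose two products on the right each contain a
vanishing factor forces `f_{α+β,γ} = 0`, since the linear factor `βλ - αμ` is nonzero and
`g ↦ g(λ+μ,∂)` is injective. Taking `β = -1` moves a zero down within the column `γ`, and taking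
`α = -1` starts column `γ + 1` from column `γ`; the triangle is filled by a double induction. -/

@[simp]
lemma sub2_zero (a b : MvPolynomial (Fin 3) ℂ) : sub2 0 a b = 0 := map_zero _

lemma linearForm_ne_zero {a b : ℂ} (h : b ≠ 0 ∨ a ≠ 0) :
    (C b * X 0 - C a * X 1 : MvPolynomial (Fin 3) ℂ) ≠ 0 := by
  intro h0
  rcases h with hb | ha
  · exact hb (by simpa using congrArg (eval ![(1 : ℂ), 0, 0]) h0)
  · exact ha (by simpa using congrArg (eval ![(0 : ℂ), 1, 0]) h0)

lemma eq_zero_of_sub2_add_eq_zero {g : MvPolynomial (Fin 2) ℂ}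
    (h : sub2 g (X 0 + X 1) (X 2) = 0) : g = 0 := by
  have hμ : aeval (R := ℂ) ![X 0, 0, X 1] (sub2 g (X 0 + X 1) (X 2))
      = (0 : MvPolynomial (Fin 2) ℂ) := by
    rw [h, map_zero]
  rw [sub2, ← AlgHom.comp_apply, comp_aeval] at hμ
  have hX : (fun i => aeval (R := ℂ) ![(X 0 : MvPolynomial (Fin 2) ℂ), 0, X 1]
      (![(X 0 + X 1 : MvPolynomial (Fin 3) ℂ), X 2] i)) = (X : Fin 2 → MvPolynomial (Fin 2) ℂ) := by
    funext i; fin_cases i <;> simp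
  rwa [hX, aeval_X_left_apply] at hμ

namespace StructEq

variable {f : ℤ → ℤ → MvPolynomial (Fin 2) ℂ}

lemma eq_zero_of_factors (hf : StructEq f) {α β γ : ℤ} (hαβ : β ≠ 0 ∨ α ≠ 0)
    (h₁ : f β γ = 0 ∨ f α (β + γ) = 0) (h₂ : f α γ = 0 ∨ f β (α + γ) = 0) :
    f (α + β) γ = 0 := by
  have h := hf α β γ
  have hrhs : sub2 (f β γ) (X 1) (X 2 + X 0) * sub2 (f α (β + γ)) (X 0) (X 2)
      - sub2 (f α γ) (X 0) (X 2 + X 1) * sub2 (f β (α + γ)) (X 1) (X 2) = 0 := by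
    rcases h₁ with h₁ | h₁ <;> rcases h₂ with h₂ | h₂ <;> simp [h₁, h₂]
  rw [hrhs] at h
  refine eq_zero_of_sub2_add_eq_zero ((mul_eq_zero.mp h).resolve_left (linearForm_ne_zero ?_))
  exact_mod_cast hαβ

lemma sub_one_eq_zero_of_eq_zero (hf : StructEq f) {α γ : ℤ}
    (h : f (-1) γ = 0 ∨ f α (γ - 1) = 0) (hα : f α γ = 0) : f (α - 1) γ = 0 := by
  have := hf.eq_zero_of_factors (α := α) (β := -1) (γ := γ) (by norm_num)
    (by rwa [neg_add_eq_sub]) (.inl hα)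
  rwa [← sub_eq_add_neg] at this

lemma sub_one_eq_zero_of_eq_zero_sub_one (hf : StructEq f) {β γ : ℤ}
    (h₁ : f (-1) (β + γ) = 0) (h₂ : f β (γ - 1) = 0) : f (β - 1) γ = 0 := by
  have := hf.eq_zero_of_factors (α := -1) (β := β) (γ := γ) (by norm_num) (.inr h₁)
    (.inr (by rwa [neg_add_eq_sub]))
  rwa [neg_add_eq_sub] at this

end StructEq

/-- If `f_{-1,γ₀} = 0` for some `γ₀`, then `f_{α,γ} = 0` whenever `γ ≥ γ₀` and
`α + γ ≤ γ₀ - 1`. -/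
theorem lemma_pre4_b (f : ℤ → ℤ → MvPolynomial (Fin 2) ℂ) (hf : StructEq f)
    (γ₀ : ℤ) (h0 : f (-1) γ₀ = 0) :
    ∀ α γ : ℤ, γ₀ ≤ γ → α + γ ≤ γ₀ - 1 → f α γ = 0 := by
  intro α γ hγ
  induction γ, hγ using Int.leInduction generalizing α with
  | base =>
    intro hα
    induction α, (by omega : α ≤ -1) using Int.leInductionDown with
    | base => exact h0
    | pred α _ ih => exact hf.sub_one_eq_zero_of_eq_zero (.inl h0) (ih (by omega))
  | succ γ hγ ih =>
    intro hα
    induction α, (by omega : α ≤ γ₀ - 1 - (γ + 1)) using Int.leInductionDown with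
    | base =>
      have := hf.sub_one_eq_zero_of_eq_zero_sub_one (β := γ₀ - 1 - γ) (γ := γ + 1)
        (by rwa [show γ₀ - 1 - γ + (γ + 1) = γ₀ by ring])
        (by simpa using ih (γ₀ - 1 - γ) (by omega))
      rwa [show γ₀ - 1 - γ - 1 = γ₀ - 1 - (γ + 1) by ring] at this
    | pred α _ ihα =>
      exact hf.sub_one_eq_zero_of_eq_zero (.inr (by simpa using ih α (by omega))) (ihα (by omega))
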